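/- In the general Galton–Watson random set framework, there exists c = c(d,M,L) > 0 such that almost surely upor(E,x) ≥ c for every x ∈ E. -/

import Mathlib

open MeasureTheory ProbabilityTheory Filter Metric Set
open scoped ENNReal ProbabilityTheory RealInnerProductSpace

noncomputable section

/-- The closed `M`-adic cube of level `n` in `[0,1]^d` indexed by `k : Fin d → ℕ`
(with `k i < M ^ n`). -/
def mCube (d M n : ℕ) (k : Fin d → ℕ) : Set (EuclideanSpace ℝ (Fin d)) :=
  {x | ∀ i, (k i : ℝ) / (M : ℝ) ^ n ≤ x i ∧ x i ≤ ((k i : ℝ) + 1) / (M : ℝ) ^ n}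

/-- Given, for every `M`-adic cube, a finite set of selected subcubes (indexed by their offsets
`f : Fin d → ℕ` with `f i < M`), the predicate saying that the level-`n` cube indexed by `k`
is one of the cubes constituting `E_n`. -/
def keptGW (M d : ℕ) (sel : ℕ × (Fin d → ℕ) → Finset (Fin d → ℕ)) : ℕ → (Fin d → ℕ) → Prop
  | 0, _ => True
  | n + 1, k => keptGW M d sel n (fun i => k i / M) ∧
      (fun i => k i % M) ∈ sel (n, fun i => k i / M)

/-- The union `E_n` of the cubes of level `n` constituting the random set, for a given
selection configuration. -/
def gwLevel (d M n : ℕ) (sel : ℕ × (Fin d → ℕ) → Finset (Fin d → ℕ)) :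
    Set (EuclideanSpace ℝ (Fin d)) :=
  ⋃ (k : Fin d → ℕ) (_ : (∀ i, k i < M ^ n) ∧ keptGW M d sel n k), mCube d M n k

/-- The limit set `E = ⋂ n, E_n` of the Galton–Watson random set, for a given selection
configuration. -/
def gwLimit (d M : ℕ) (sel : ℕ × (Fin d → ℕ) → Finset (Fin d → ℕ)) :
    Set (EuclideanSpace ℝ (Fin d)) :=
  ⋂ n, gwLevel d M n sel

/-- The porosity of `A` at `x` at scale `r`:
`por(A,x,r) = sup {ϱ ≥ 0 : ∃ y, B(y,ϱr) ⊆ B(x,r) \ A}` (closed balls). -/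
def por {d : ℕ} (A : Set (EuclideanSpace ℝ (Fin d))) (x : EuclideanSpace ℝ (Fin d)) (r : ℝ) :
    ℝ :=
  sSup {ϱ : ℝ | 0 ≤ ϱ ∧ ∃ y, closedBall y (ϱ * r) ⊆ closedBall x r \ A}

/-- The upper porosity of `A` at `x`: `limsup_{r → 0+} por(A,x,r)`. -/
def upor {d : ℕ} (A : Set (EuclideanSpace ℝ (Fin d))) (x : EuclideanSpace ℝ (Fin d)) : ℝ :=
  limsup (fun r => por A x r) (nhdsWithin 0 (Ioi 0))

/-- The lower porosity of `A` at `x`: `liminf_{r → 0+} por(A,x,r)`. -/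
def lpor {d : ℕ} (A : Set (EuclideanSpace ℝ (Fin d))) (x : EuclideanSpace ℝ (Fin d)) : ℝ :=
  liminf (fun r => por A x r) (nhdsWithin 0 (Ioi 0))

/-!
A cube with a child missing is porous: the ball around the centre of that child, of a quarter of
its side, misses `E`. So if some cube at most `N` generations below the level-`j` cube of `x`
misses a child, then `por(E, x, 2√d M^{-j}) ≥ c := 1 / (8 √d M^{N+1})`. Hence `upor(E, x) < c`
forces, from some level `a` on, every ancestor of `x` to have all its `M^{dN}` descendants `N`
generations down kept and fully selected. Up to level `a + n` this is `(n + 1) M^{dN}`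
independent events of probability `q = P(L = M^d) < 1` for each of the `M^{d(a+n)}` candidate
cubes, so with `M^d q^N < 1` the union bound gives probability `≤ M^{da} (M^d q^N)^n → 0`.
-/

open scoped Topology

namespace GaltonWatson

variable {d M : ℕ}

lemma mul_add_div_of_lt {a b m : ℕ} (h : b < m) : (a * m + b) / m = a := by
  rw [Nat.add_comm, Nat.add_mul_div_right _ _ (by omega), Nat.div_eq_of_lt h, zero_add]

lemma mCube_subset_mCube_div (hM : 0 < M) {n j : ℕ} (hj : j ≤ n) (k : Fin d → ℕ) :
    mCube d M n k ⊆ mCube d M j (fun i => k i / M ^ (n - j)) := by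
  intro x hx i
  obtain ⟨hlo, hhi⟩ := hx i
  have hM' : (0 : ℝ) < M := by exact_mod_cast hM
  have hsplit : (M : ℝ) ^ n = M ^ (n - j) * M ^ j := by
    rw [← pow_add, Nat.sub_add_cancel hj]
  have hfloor : ((k i / M ^ (n - j) : ℕ) : ℝ) ≤ k i / M ^ (n - j) := by
    exact_mod_cast Nat.cast_div_le
  have hceil : (k i : ℝ) + 1 ≤ ((k i / M ^ (n - j) : ℕ) + 1) * M ^ (n - j) := by
    have h : k i + 1 ≤ (k i / M ^ (n - j) + 1) * M ^ (n - j) := by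
      rw [add_mul, one_mul]; exact Nat.lt_div_mul_add (pow_pos hM _)
    exact_mod_cast h
  rw [hsplit, ← div_div] at hlo hhi
  constructor
  · exact (div_le_div_of_nonneg_right hfloor (by positivity)).trans hlo
  · refine hhi.trans (div_le_div_of_nonneg_right ?_ (by positivity))
    rwa [div_le_iff₀ (by positivity)]

lemma keptGW_div (sel : ℕ × (Fin d → ℕ) → Finset (Fin d → ℕ)) {n : ℕ} {k : Fin d → ℕ}
    (hk : keptGW M d sel n k) {j : ℕ} (hj : j ≤ n) :
    keptGW M d sel j (fun i => k i / M ^ (n - j)) := by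
  induction n generalizing k with
  | zero => simpa [Nat.le_zero.mp hj] using hk
  | succ n ih =>
    rcases hj.eq_or_lt with rfl | hlt
    · simpa using hk
    · convert ih hk.1 (Nat.le_of_lt_succ hlt) using 2 with i
      rw [Nat.div_div_eq_div_mul, ← pow_succ', Nat.sub_add_comm (Nat.le_of_lt_succ hlt)]

lemma dist_le_sqrt_card_mul {ι : Type*} [Fintype ι] {x y : EuclideanSpace ℝ ι} {s : ℝ}
    (hs : 0 ≤ s) (h : ∀ i, dist (x i) (y i) ≤ s) : dist x y ≤ √(Fintype.card ι) * s := by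
  rw [EuclideanSpace.dist_eq]
  calc √(∑ i, dist (x i) (y i) ^ 2) ≤ √(∑ _i : ι, s ^ 2) := by
        gcongr with i; exact h i
    _ = √(Fintype.card ι) * s := by
        rw [Finset.sum_const, Finset.card_univ, nsmul_eq_mul, Real.sqrt_mul (by positivity),
          Real.sqrt_sq hs]

lemma dist_le_of_mem_mCube {n : ℕ} {k : Fin d → ℕ} {x y : EuclideanSpace ℝ (Fin d)}
    (hx : x ∈ mCube d M n k) (hy : y ∈ mCube d M n k) : dist x y ≤ √d / M ^ n := by
  have key : ∀ i, dist (x i) (y i) ≤ 1 / M ^ n := fun i => by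
    obtain ⟨hx1, hx2⟩ := hx i
    obtain ⟨hy1, hy2⟩ := hy i
    rw [add_div] at hx2 hy2
    rw [Real.dist_eq, abs_le]
    constructor <;> linarith
  simpa [Fintype.card_fin, div_eq_mul_inv] using dist_le_sqrt_card_mul (by positivity) key

def mCubeCenter (d M n : ℕ) (k : Fin d → ℕ) : EuclideanSpace ℝ (Fin d) :=
  WithLp.toLp 2 fun i => (k i + 1 / 2) / M ^ n

lemma mCubeCenter_mem (hM : 0 < M) (n : ℕ) (k : Fin d → ℕ) :
    mCubeCenter d M n k ∈ mCube d M n k := fun i => by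
  have : (0 : ℝ) < M ^ n := by positivity
  constructor <;> simp only [mCubeCenter] <;> gcongr <;> norm_num

lemma inv_two_mul_le_dist_mCubeCenter (hM : 0 < M) {n : ℕ} {k k' : Fin d → ℕ}
    {x : EuclideanSpace ℝ (Fin d)} (hx : x ∈ mCube d M n k') (hne : k' ≠ k) :
    1 / (2 * M ^ n) ≤ dist x (mCubeCenter d M n k) := by
  obtain ⟨i, hi⟩ := Function.ne_iff.mp hne
  have hs : (0 : ℝ) < M ^ n := by positivity
  obtain ⟨hlo, hhi⟩ := hx i
  rw [div_le_iff₀ hs] at hlo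
  rw [le_div_iff₀ hs] at hhi
  refine le_trans ?_ (PiLp.dist_apply_le _ _ i)
  have hcoord : x i - (k i + 1 / 2) / M ^ n = (x i * M ^ n - (k i + 1 / 2)) / M ^ n := by
    field_simp
  simp only [mCubeCenter, Real.dist_eq, hcoord, abs_div, abs_of_pos hs]
  rw [← div_div (1 : ℝ) 2, div_le_div_iff_of_pos_right hs, le_abs]
  rcases hi.lt_or_gt with hlt | hgt
  · have : (k' i : ℝ) + 1 ≤ k i := by exact_mod_cast hlt
    right; linarith
  · have : (k i : ℝ) + 1 ≤ k' i := by exact_mod_cast hgt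
    left; linarith

lemma closedBall_mCubeCenter_disjoint_gwLevel (hM : 0 < M)
    (sel : ℕ × (Fin d → ℕ) → Finset (Fin d → ℕ)) {ℓ : ℕ} {K f : Fin d → ℕ}
    (hf : ∀ i, f i < M) (hfK : f ∉ sel (ℓ, K)) :
    Disjoint (closedBall (mCubeCenter d M (ℓ + 1) fun i => K i * M + f i) (1 / (4 * M ^ (ℓ + 1))))
      (gwLevel d M (ℓ + 1) sel) := by
  rw [Set.disjoint_left]
  intro z hz hzE
  simp only [gwLevel, mem_iUnion] at hzE
  obtain ⟨k', ⟨-, hk'⟩, hzk'⟩ := hzE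
  by_cases hchild : k' = fun i => K i * M + f i
  · subst hchild
    obtain ⟨-, hmem⟩ := hk'
    simp only [mul_add_div_of_lt (hf _), Nat.mul_add_mod_of_lt (hf _)] at hmem
    exact hfK hmem
  · have hfar := inv_two_mul_le_dist_mCubeCenter hM hzk' hchild
    have : 1 / (4 * (M : ℝ) ^ (ℓ + 1)) < 1 / (2 * M ^ (ℓ + 1)) := by gcongr; norm_num
    exact absurd (mem_closedBall.mp hz) (by linarith)

lemma le_one_of_closedBall_subset (hd : 1 ≤ d) {A : Set (EuclideanSpace ℝ (Fin d))}
    {x y : EuclideanSpace ℝ (Fin d)} {r ϱ : ℝ} (hr : 0 < r) (hϱ : 0 ≤ ϱ)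
    (hball : closedBall y (ϱ * r) ⊆ closedBall x r \ A) : ϱ ≤ 1 := by
  have : Nonempty (Fin d) := ⟨⟨0, hd⟩⟩
  have hdiam := diam_mono (hball.trans sdiff_subset) isBounded_closedBall
  rw [diam_closedBall_eq _ (by positivity), diam_closedBall_eq _ hr.le] at hdiam
  nlinarith

lemma por_le_one (hd : 1 ≤ d) (A : Set (EuclideanSpace ℝ (Fin d))) (x : EuclideanSpace ℝ (Fin d))
    {r : ℝ} (hr : 0 < r) : por A x r ≤ 1 :=
  Real.sSup_le (fun _ ⟨hϱ, _, hball⟩ => le_one_of_closedBall_subset hd hr hϱ hball) zero_le_one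

lemma le_por (hd : 1 ≤ d) {A : Set (EuclideanSpace ℝ (Fin d))} {x y : EuclideanSpace ℝ (Fin d)}
    {r ϱ : ℝ} (hr : 0 < r) (hϱ : 0 ≤ ϱ) (hball : closedBall y (ϱ * r) ⊆ closedBall x r \ A) :
    ϱ ≤ por A x r :=
  le_csSup ⟨1, fun _ ⟨hϱ', _, hball'⟩ => le_one_of_closedBall_subset hd hr hϱ' hball'⟩
    ⟨hϱ, y, hball⟩

lemma le_upor_of_frequently_le (hd : 1 ≤ d) {A : Set (EuclideanSpace ℝ (Fin d))}
    {x : EuclideanSpace ℝ (Fin d)} {c : ℝ} {r : ℕ → ℝ} (hr : Tendsto r atTop (𝓝[>] 0))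
    (h : ∃ᶠ j in atTop, c ≤ por A x (r j)) : c ≤ upor A x :=
  le_limsup_of_frequently_le (hr.frequently h)
    ⟨1, eventually_map.mpr (eventually_mem_nhdsWithin.mono fun _ hr => por_le_one hd A x hr)⟩

lemma tendsto_const_div_pow_nhdsGT_zero (hM : 2 ≤ M) {a : ℝ} (ha : 0 < a) :
    Tendsto (fun j : ℕ => a / M ^ j) atTop (𝓝[>] 0) := by
  have hM' : (1 : ℝ) < M := by exact_mod_cast hM
  refine tendsto_nhdsWithin_iff.mpr
    ⟨?_, Eventually.of_forall fun j => show 0 < a / M ^ j by positivity⟩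
  simpa [div_eq_mul_inv, ← inv_pow] using
    (tendsto_pow_atTop_nhds_zero_of_lt_one (by positivity) (inv_lt_one_of_one_lt₀ hM')).const_mul a

def porosityConst (d M t : ℕ) : ℝ := 1 / (8 * √d * M ^ (t + 1))

lemma porosityConst_pos (hd : 1 ≤ d) (hM : 2 ≤ M) (t : ℕ) : 0 < porosityConst d M t := by
  have : (0 : ℝ) < √d := Real.sqrt_pos.mpr (by exact_mod_cast hd)
  have : (0 : ℝ) < M := by exact_mod_cast (by omega : 0 < M)
  unfold porosityConst; positivity

lemma porosityConst_le_por_of_notMem (hd : 1 ≤ d) (hM : 2 ≤ M)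
    (sel : ℕ × (Fin d → ℕ) → Finset (Fin d → ℕ)) {x : EuclideanSpace ℝ (Fin d)} {j s t : ℕ}
    (hst : s ≤ t) {A K f : Fin d → ℕ} (hxA : x ∈ mCube d M j A) (hKA : ∀ i, K i / M ^ s = A i)
    (hf : ∀ i, f i < M) (hfK : f ∉ sel (j + s, K)) :
    porosityConst d M t ≤ por (gwLimit d M sel) x (2 * √d / M ^ j) := by
  have hM0 : 0 < M := by omega
  have hM1 : (1 : ℝ) ≤ M := by exact_mod_cast hM0
  have hsqrt : (1 : ℝ) ≤ √d := Real.one_le_sqrt.mpr (by exact_mod_cast hd)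
  set y := mCubeCenter d M (j + s + 1) fun i => K i * M + f i
  have hchildA : (fun i => (K i * M + f i) / M ^ (j + s + 1 - j)) = A := funext fun i => by
    rw [show j + s + 1 - j = s + 1 by omega, pow_succ', ← Nat.div_div_eq_div_mul,
      mul_add_div_of_lt (hf i), hKA]
  have hyA : y ∈ mCube d M j A :=
    hchildA ▸ mCube_subset_mCube_div hM0 (by omega) _ (mCubeCenter_mem hM0 _ _)
  have hyx : dist y x ≤ √d / M ^ j := dist_le_of_mem_mCube hyA hxA
  have hcr : porosityConst d M t * (2 * √d / M ^ j) = 1 / (4 * M ^ (j + t + 1)) := by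
    unfold porosityConst
    rw [pow_add, pow_add]
    field_simp
    ring
  have hrad : 1 / (4 * (M : ℝ) ^ (j + t + 1)) ≤ 1 / (4 * M ^ (j + s + 1)) := by
    gcongr
  have hrad' : 1 / (4 * (M : ℝ) ^ (j + t + 1)) ≤ √d / M ^ j := by
    have hMj : (M : ℝ) ^ j ≤ 4 * M ^ (j + t + 1) := by
      nlinarith [pow_le_pow_right₀ hM1 (by omega : j ≤ j + t + 1),
        pow_pos (by positivity : (0 : ℝ) < M) j]
    calc 1 / (4 * (M : ℝ) ^ (j + t + 1)) ≤ 1 / M ^ j := one_div_le_one_div_of_le (by positivity) hMj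
      _ ≤ √d / M ^ j := by gcongr
  refine le_por (y := y) hd (by positivity) (porosityConst_pos hd hM t).le fun z hz => ?_
  rw [hcr, mem_closedBall] at hz
  refine ⟨?_, fun hzE => ?_⟩
  · rw [mem_closedBall]
    linarith [dist_triangle z y x, show 2 * √d / (M : ℝ) ^ j = √d / M ^ j + √d / M ^ j by ring]
  · exact (closedBall_mCubeCenter_disjoint_gwLevel hM0 sel hf hfK).notMem_of_mem_left
      (mem_closedBall.mpr (hz.trans hrad)) (mem_iInter.mp hzE (j + s + 1))

def childOffsets (d M : ℕ) : Finset (Fin d → ℕ) := Fintype.piFinset fun _ => Finset.range M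

lemma mem_childOffsets {f : Fin d → ℕ} : f ∈ childOffsets d M ↔ ∀ i, f i < M := by
  simp [childOffsets]

lemma card_childOffsets : (childOffsets d M).card = M ^ d := by
  simp [childOffsets]

lemma eq_childOffsets_of_card_eq {s : Finset (Fin d → ℕ)} (hs : ∀ f ∈ s, ∀ i, f i < M)
    (hcard : s.card = M ^ d) : s = childOffsets d M :=
  Finset.eq_of_subset_of_card_le (fun f hf => mem_childOffsets.mpr (hs f hf))
    (by rw [hcard, card_childOffsets])

lemma exists_notMem_of_card_ne {s : Finset (Fin d → ℕ)} (hs : ∀ f ∈ s, ∀ i, f i < M)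
    (hcard : s.card ≠ M ^ d) : ∃ f, (∀ i, f i < M) ∧ f ∉ s := by
  by_contra! h
  refine hcard ?_
  rw [Finset.Subset.antisymm (fun f hf => mem_childOffsets.mpr (hs f hf))
    (fun f hf => h f (mem_childOffsets.mp hf)), card_childOffsets]

lemma keptGW_mul_pow_add (hM : 0 < M) (sel : ℕ × (Fin d → ℕ) → Finset (Fin d → ℕ))
    (hsel : ∀ p, ∀ f ∈ sel p, ∀ i, f i < M) {ℓ t : ℕ} {A : Fin d → ℕ} (hA : keptGW M d sel ℓ A)
    (hfull : ∀ s < t, ∀ K, keptGW M d sel (ℓ + s) K → (∀ i, K i / M ^ s = A i) →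
      (sel (ℓ + s, K)).card = M ^ d)
    {g : Fin d → ℕ} (hg : ∀ i, g i < M ^ t) :
    keptGW M d sel (ℓ + t) fun i => A i * M ^ t + g i := by
  induction t generalizing g with
  | zero => simpa [Nat.lt_one_iff.mp (hg _)] using hA
  | succ t ih =>
    have hparent : ∀ i, g i / M < M ^ t := fun i =>
      Nat.div_lt_of_lt_mul (by rw [← pow_succ']; exact hg i)
    have hkept := ih (fun s hs => hfull s (hs.trans t.lt_succ_self)) hparent
    have hdiv : (fun i => (A i * M ^ (t + 1) + g i) / M) = fun i => A i * M ^ t + g i / M :=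
      funext fun i => by
        rw [pow_succ, ← mul_assoc, Nat.add_comm, Nat.add_mul_div_right _ _ hM, Nat.add_comm]
    have hmod : (fun i => (A i * M ^ (t + 1) + g i) % M) = fun i => g i % M :=
      funext fun i => by rw [pow_succ, ← mul_assoc, Nat.mul_add_mod_self_right]
    have hsel_full := eq_childOffsets_of_card_eq (hsel _)
      (hfull t t.lt_succ_self _ hkept fun i => mul_add_div_of_lt (hparent i))
    show keptGW M d sel (ℓ + t + 1) _
    rw [keptGW, hdiv, hmod, hsel_full, mem_childOffsets]
    exact ⟨hkept, fun i => Nat.mod_lt _ hM⟩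

/-- The indices `(a + i + N, ·)` of the `M ^ (d * N)` descendants, `N` levels down, of the
ancestors at levels `a + i`, `i ≤ n`, of the level-`(a + n)` cube `k`. -/
def tubeIndices (M N a n : ℕ) (k : Fin d → ℕ) : Finset (ℕ × (Fin d → ℕ)) :=
  (Finset.range (n + 1) ×ˢ Fintype.piFinset fun _ => Finset.range (M ^ N)).image
    fun ig => (a + ig.1 + N, fun i => k i / M ^ (n - ig.1) * M ^ N + ig.2 i)

lemma card_tubeIndices (M N a n : ℕ) (k : Fin d → ℕ) :
    (tubeIndices M N a n k).card = (n + 1) * (M ^ N) ^ d := by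
  rw [tubeIndices, Finset.card_image_of_injOn, Finset.card_product, Finset.card_range,
    Fintype.card_piFinset, Finset.prod_const, Finset.card_range, Finset.card_univ,
    Fintype.card_fin]
  rintro ⟨i, g⟩ - ⟨i', g'⟩ - h
  obtain ⟨hi, hg⟩ := Prod.mk.inj h
  obtain rfl : i = i' := by omega
  exact Prod.ext rfl (funext fun j => Nat.add_left_cancel (congrFun hg j))

lemma card_sel_mul_pow_add_eq_of_por_lt (hd : 1 ≤ d) (hM : 2 ≤ M)
    (sel : ℕ × (Fin d → ℕ) → Finset (Fin d → ℕ)) (hsel : ∀ p, ∀ f ∈ sel p, ∀ i, f i < M)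
    {x : EuclideanSpace ℝ (Fin d)} {j N : ℕ} {A : Fin d → ℕ} (hxA : x ∈ mCube d M j A)
    (hA : keptGW M d sel j A)
    (hpor : por (gwLimit d M sel) x (2 * √d / M ^ j) < porosityConst d M N)
    {g : Fin d → ℕ} (hg : ∀ i, g i < M ^ N) :
    (sel (j + N, fun i => A i * M ^ N + g i)).card = M ^ d := by
  have hfull : ∀ s ≤ N, ∀ K, keptGW M d sel (j + s) K → (∀ i, K i / M ^ s = A i) →
      (sel (j + s, K)).card = M ^ d := by
    intro s hs K _ hKA
    by_contra hne
    obtain ⟨f, hf, hfK⟩ := exists_notMem_of_card_ne (hsel _) hne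
    exact hpor.not_ge (porosityConst_le_por_of_notMem hd hM sel hs hxA hKA hf hfK)
  exact hfull N le_rfl _
    (keptGW_mul_pow_add (by omega) sel hsel hA (fun s hs => hfull s hs.le) hg)
    fun i => mul_add_div_of_lt (hg i)

lemma exists_forall_tubeIndices_card_eq_of_upor_lt (hd : 1 ≤ d) (hM : 2 ≤ M)
    (sel : ℕ × (Fin d → ℕ) → Finset (Fin d → ℕ)) (hsel : ∀ p, ∀ f ∈ sel p, ∀ i, f i < M)
    (N : ℕ) {x : EuclideanSpace ℝ (Fin d)} (hx : x ∈ gwLimit d M sel)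
    (hu : upor (gwLimit d M sel) x < porosityConst d M N) :
    ∃ a, ∀ n, ∃ k : Fin d → ℕ, (∀ i, k i < M ^ (a + n)) ∧
      ∀ p ∈ tubeIndices M N a n k, (sel p).card = M ^ d := by
  have hsmall : ∀ᶠ j in atTop, por (gwLimit d M sel) x (2 * √d / M ^ j) < porosityConst d M N := by
    by_contra h
    simp only [not_eventually, not_lt] at h
    exact hu.not_ge (le_upor_of_frequently_le hd
      (tendsto_const_div_pow_nhdsGT_zero hM (by positivity)) h)
  obtain ⟨a, ha⟩ := eventually_atTop.mp hsmall
  refine ⟨a, fun n => ?_⟩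
  have hxn : x ∈ gwLevel d M (a + n) sel := mem_iInter.mp hx (a + n)
  simp only [gwLevel, mem_iUnion] at hxn
  obtain ⟨k, ⟨hk, hkept⟩, hxk⟩ := hxn
  refine ⟨k, hk, ?_⟩
  simp only [tubeIndices, Finset.mem_image, Finset.mem_product, Finset.mem_range,
    Fintype.mem_piFinset]
  rintro _ ⟨⟨i, g⟩, ⟨hi, hg⟩, rfl⟩
  have hin : a + i ≤ a + n := by omega
  have hlevel : a + n - (a + i) = n - i := Nat.add_sub_add_left a n i
  have hxA := mCube_subset_mCube_div (by omega : 0 < M) hin k hxk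
  have hA := keptGW_div sel hkept hin
  rw [hlevel] at hxA hA
  exact card_sel_mul_pow_add_eq_of_por_lt hd hM sel hsel hxA hA (ha _ (by omega)) hg

lemma measure_iInter_preimage_eq_pow {Ω ι β : Type*} [MeasurableSpace Ω] [MeasurableSpace β]
    {P : Measure Ω} {X : ι → Ω → β} (hindep : iIndepFun X P) {ν : Measure β} [NeZero ν]
    (hlaw : ∀ i, P.map (X i) = ν) (s : Finset ι) {B : Set β} (hB : MeasurableSet B) :
    P (⋂ i ∈ s, X i ⁻¹' B) = ν B ^ s.card := by
  have hX : ∀ i, P (X i ⁻¹' B) = ν B := fun i => by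
    rw [← hlaw i, Measure.map_apply_of_aemeasurable
      (AEMeasurable.of_map_ne_zero (by rw [hlaw i]; exact NeZero.ne ν)) hB]
  rw [iIndepFun_iff_measure_inter_preimage_eq_mul.mp hindep s fun _ _ => hB,
    Finset.prod_congr rfl fun i _ => hX i, Finset.prod_const]

def fullTubesEvent {Ω : Type*} (select : ℕ × (Fin d → ℕ) → Ω → Finset (Fin d → ℕ))
    (M N a n : ℕ) : Set Ω :=
  ⋃ k ∈ Fintype.piFinset (fun _ : Fin d => Finset.range (M ^ (a + n))),
    ⋂ p ∈ tubeIndices M N a n k, (fun ω => (select p ω).card) ⁻¹' {M ^ d}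

lemma self_le_pow_pow (hd : 1 ≤ d) (hM : 2 ≤ M) (N : ℕ) : N ≤ (M ^ N) ^ d :=
  calc N ≤ 2 ^ N := Nat.lt_two_pow_self.le
    _ ≤ M ^ N := Nat.pow_le_pow_left hM N
    _ ≤ (M ^ N) ^ d := Nat.le_self_pow (by omega) _

lemma measure_fullTubesEvent_le {Ω : Type*} [MeasurableSpace Ω] {P : Measure Ω}
    (hd : 1 ≤ d) (hM : 2 ≤ M) {select : ℕ × (Fin d → ℕ) → Ω → Finset (Fin d → ℕ)}
    (hindep : iIndepFun (fun p ω => (select p ω).card) P) {ν : Measure ℕ} [NeZero ν]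
    (hlaw : ∀ p, P.map (fun ω => (select p ω).card) = ν) (hfull : ν {M ^ d} ≤ 1) (N a n : ℕ) :
    P (fullTubesEvent select M N a n) ≤
      ((M : ℝ≥0∞) ^ d) ^ a * ((M : ℝ≥0∞) ^ d * ν {M ^ d} ^ N) ^ n := by
  have hexp : N * n ≤ (n + 1) * (M ^ N) ^ d := by
    nlinarith [self_le_pow_pow hd hM N]
  calc P (fullTubesEvent select M N a n)
      ≤ ∑ k ∈ Fintype.piFinset (fun _ : Fin d => Finset.range (M ^ (a + n))),
          P (⋂ p ∈ tubeIndices M N a n k, (fun ω => (select p ω).card) ⁻¹' {M ^ d}) :=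
        measure_biUnion_finset_le _ _
    _ = ((M : ℝ≥0∞) ^ d) ^ (a + n) * ν {M ^ d} ^ ((n + 1) * (M ^ N) ^ d) := by
        simp only [measure_iInter_preimage_eq_pow hindep hlaw _ (measurableSet_singleton _),
          card_tubeIndices, Finset.sum_const, Fintype.card_piFinset, Finset.card_range,
          Finset.prod_const, Finset.card_univ, Fintype.card_fin, nsmul_eq_mul]
        push_cast
        ring
    _ ≤ ((M : ℝ≥0∞) ^ d) ^ (a + n) * ν {M ^ d} ^ (N * n) :=
        mul_le_mul_right (pow_le_pow_right_of_le_one' hfull hexp) _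
    _ = ((M : ℝ≥0∞) ^ d) ^ a * ((M : ℝ≥0∞) ^ d * ν {M ^ d} ^ N) ^ n := by
        ring

lemma tendsto_const_mul_pow_atTop_nhds_zero {a r : ℝ≥0∞} (ha : a ≠ ∞) (hr : r < 1) :
    Tendsto (fun n : ℕ => a * r ^ n) atTop (𝓝 0) := by
  simpa using ENNReal.Tendsto.const_mul (ENNReal.tendsto_pow_atTop_nhds_zero_of_lt_one hr)
    (Or.inr ha)

lemma measure_iInter_fullTubesEvent_eq_zero {Ω : Type*} [MeasurableSpace Ω] {P : Measure Ω}
    (hd : 1 ≤ d) (hM : 2 ≤ M) {select : ℕ × (Fin d → ℕ) → Ω → Finset (Fin d → ℕ)}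
    (hindep : iIndepFun (fun p ω => (select p ω).card) P) {ν : Measure ℕ} [IsProbabilityMeasure ν]
    (hlaw : ∀ p, P.map (fun ω => (select p ω).card) = ν) {N : ℕ}
    (hN : (M : ℝ≥0∞) ^ d * ν {M ^ d} ^ N < 1) (a : ℕ) :
    P (⋂ n, fullTubesEvent select M N a n) = 0 :=
  le_antisymm (ge_of_tendsto' (tendsto_const_mul_pow_atTop_nhds_zero (by simp) hN) fun n =>
    (measure_mono (iInter_subset _ n)).trans
      (measure_fullTubesEvent_le hd hM hindep hlaw prob_le_one N a n)) bot_le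

end GaltonWatson

open GaltonWatson

theorem stmt15_general {Ω : Type} [MeasurableSpace Ω] (d M : ℕ) (hd : 1 ≤ d) (hM : 2 ≤ M)
    (P : Measure Ω)
    (select : ℕ × (Fin d → ℕ) → Ω → Finset (Fin d → ℕ))
    (hsel : ∀ q ω, ∀ f ∈ select q ω, ∀ i, f i < M)
    (hindep : iIndepFun (fun q ω => (select q ω).card) P)
    (ν : Measure ℕ) [IsProbabilityMeasure ν]
    (hlaw : ∀ q, Measure.map (fun ω => (select q ω).card) P = ν)
    (hLtop : ν {M ^ d} < 1) :
    ∃ c : ℝ, 0 < c ∧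
      ∀ᵐ ω ∂P, ∀ x ∈ gwLimit d M (fun q => select q ω), c ≤ upor (gwLimit d M (fun q => select q ω)) x := by
  obtain ⟨N, hN⟩ : ∃ N, (M : ℝ≥0∞) ^ d * ν {M ^ d} ^ N < 1 :=
    ((tendsto_const_mul_pow_atTop_nhds_zero (by simp) hLtop).eventually_lt_const
      zero_lt_one).exists
  refine ⟨porosityConst d M N, porosityConst_pos hd hM N, ?_⟩
  rw [ae_iff]
  refine measure_mono_null (fun ω hω => ?_) (measure_iUnion_null
    (measure_iInter_fullTubesEvent_eq_zero hd hM hindep hlaw hN))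
  obtain ⟨x, hx, hu⟩ : ∃ x ∈ gwLimit d M (fun q => select q ω),
      upor (gwLimit d M (fun q => select q ω)) x < porosityConst d M N := by
    simpa using hω
  obtain ⟨a, ha⟩ := exists_forall_tubeIndices_card_eq_of_upor_lt hd hM _ (fun q => hsel q ω) N hx hu
  simp only [fullTubesEvent, mem_iUnion, mem_iInter, mem_preimage, mem_singleton_iff,
    Fintype.mem_piFinset, Finset.mem_range, exists_prop]
  exact ⟨a, ha⟩

/-- In the general Galton–Watson random set framework, there is
`c > 0` such that a.s. `upor(E,x) ≥ c` for every `x ∈ E`. -/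
theorem stmt15 {Ω : Type} [MeasurableSpace Ω] (d M : ℕ) (hd : 1 ≤ d) (hM : 2 ≤ M)
    (P : Measure Ω) [IsProbabilityMeasure P]
    (select : ℕ × (Fin d → ℕ) → Ω → Finset (Fin d → ℕ))
    (hsel : ∀ q ω, ∀ f ∈ select q ω, ∀ i, f i < M)
    (hmeas : ∀ q, Measurable fun ω => (select q ω).card)
    (hindep : iIndepFun (fun q ω => (select q ω).card) P)
    (ν : Measure ℕ) [IsProbabilityMeasure ν]
    (hlaw : ∀ q, Measure.map (fun ω => (select q ω).card) P = ν)
    (hL1 : ν {1} < 1) (hLtop : ν {M ^ d} < 1) :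
    ∃ c : ℝ, 0 < c ∧
      ∀ᵐ ω ∂P, ∀ x ∈ gwLimit d M (fun q => select q ω), c ≤ upor (gwLimit d M (fun q => select q ω)) x :=
  stmt15_general d M hd hM P select hsel hindep ν hlaw hLtop
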